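/- For every graph G = (V,E), there exists an optimal edge-deletion set F (minimum set of edges whose removal makes G P_4-free) such that every module of G is also a module of the P_4-free graph H = (V, E \ F). -/

import Mathlib

variable {V : Type*}

/-- `{a,b,c,d}` induces a path `a - b - c - d` on four vertices in `G`. -/
def IsInducedP4 (G : SimpleGraph V) (a b c d : V) : Prop :=
  a ≠ b ∧ a ≠ c ∧ a ≠ d ∧ b ≠ c ∧ b ≠ d ∧ c ≠ d ∧
  G.Adj a b ∧ G.Adj b c ∧ G.Adj c d ∧ ¬ G.Adj a c ∧ ¬ G.Adj a d ∧ ¬ G.Adj b d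

/-- `G` has no induced path on four vertices. -/
def P4Free (G : SimpleGraph V) : Prop := ∀ a b c d : V, ¬ IsInducedP4 G a b c d

/-- `M` is a module of `G`: every vertex outside `M` is adjacent to all or none of `M`. -/
def IsModule (G : SimpleGraph V) (M : Set V) : Prop :=
  ∀ x ∉ M, (∀ v ∈ M, G.Adj x v) ∨ (∀ v ∈ M, ¬ G.Adj x v)

/-- `F` is an edge-deletion set of `G`: a set of edges whose removal makes `G` `P₄`-free. -/
def IsDelSet (G : SimpleGraph V) (F : Set (Sym2 V)) : Prop :=
  F ⊆ G.edgeSet ∧ P4Free (G.deleteEdges F)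

/-- `F` is an optimal (minimum-cardinality) edge-deletion set of `G`. -/
def IsOptDelSet (G : SimpleGraph V) (F : Set (Sym2 V)) : Prop :=
  IsDelSet G F ∧ ∀ F' : Set (Sym2 V), IsDelSet G F' → F.ncard ≤ F'.ncard

/-!
Induction on the number of vertices, following the modular decomposition. If `G` is not
`P₄`-free, its vertices are partitioned into the connected components of `G`, or those of its
complement, or (when both are connected) the maximal proper modules. In each case there is an
optimal solution `H` of which every part is a module and which keeps every module of `G` that is a
union of parts: for components any optimal `H` will do; for co-components one adds back all edges
between parts; in the prime case one repeatedly *exchanges* a part `M`, giving every vertex of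
`M` the outside neighbourhood in `H` of the vertex of `M` that lost the fewest edges to the outside.
Every other module of `G` lies inside a single part. Replacing `H` inside each part by a solution
for that part given by induction then preserves all modules of `G`. None of these operations
creates a `P₄`, because an induced `P₄` meets a module in at most one vertex or lies inside it,
and none raises the cost (for the exchange, by the choice of that vertex).
-/

open SimpleGraph Set

variable {G H : SimpleGraph V} {M N : Set V}

theorem IsModule.adj_iff (hM : IsModule G M) {x u w : V} (hx : x ∉ M) (hu : u ∈ M) (hw : w ∈ M) :
    G.Adj x u ↔ G.Adj x w := by
  rcases hM x hx with h | h
  · exact iff_of_true (h u hu) (h w hw)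
  · exact iff_of_false (h u hu) (h w hw)

theorem isModule_empty : IsModule G ∅ := fun _ _ => Or.inl fun _ h => h.elim

theorem isModule_singleton (G : SimpleGraph V) (v : V) : IsModule G {v} := by
  intro x _
  by_cases h : G.Adj x v
  · exact Or.inl fun w hw => hw ▸ h
  · exact Or.inr fun w hw => hw ▸ h

theorem IsModule.union (hM : IsModule G M) (hN : IsModule G N) (hMN : (M ∩ N).Nonempty) :
    IsModule G (M ∪ N) := by
  obtain ⟨z, hzM, hzN⟩ := hMN
  have key : ∀ x ∉ M ∪ N, ∀ m ∈ M ∪ N, G.Adj x m ↔ G.Adj x z := by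
    rintro x hx m (hm | hm) <;> rw [mem_union, not_or] at hx
    exacts [hM.adj_iff hx.1 hm hzM, hN.adj_iff hx.2 hm hzN]
  intro x hx
  by_cases h : G.Adj x z
  · exact Or.inl fun m hm => (key x hx m hm).2 h
  · exact Or.inr fun m hm h' => h ((key x hx m hm).1 h')

theorem IsModule.compl (hM : IsModule G M) : IsModule Gᶜ M := by
  intro x hx
  rcases hM x hx with h | h
  · exact Or.inr fun m hm h' => ((compl_adj G x m).1 h').2 (h m hm)
  · exact Or.inl fun m hm => (compl_adj G x m).2 ⟨fun e => hx (e ▸ hm), h m hm⟩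

theorem IsModule.induce (hM : IsModule G M) (S : Set V) :
    IsModule (G.induce S) (Subtype.val ⁻¹' M) :=
  fun x hx => (hM x hx).imp (fun h v hv => h v hv) (fun h v hv => h v hv)

theorem IsModule.of_induce {S : Set V} (hS : IsModule G S) (hMS : M ⊆ S)
    (hM : IsModule (G.induce S) (Subtype.val ⁻¹' M)) : IsModule G M := by
  intro x hx
  by_cases hxS : x ∈ S
  · exact (hM ⟨x, hxS⟩ hx).imp (fun h m hm => h ⟨m, hMS hm⟩ hm) (fun h m hm => h ⟨m, hMS hm⟩ hm)
  · exact (hS x hxS).imp (fun h m hm => h m (hMS hm)) (fun h m hm => h m (hMS hm))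

theorem IsModule.subset_of_isInducedP4 (hM : IsModule G M) {a b c d u w : V}
    (h : IsInducedP4 G a b c d) (hu : u ∈ ({a, b, c, d} : Set V))
    (hw : w ∈ ({a, b, c, d} : Set V)) (huw : u ≠ w) (huM : u ∈ M) (hwM : w ∈ M) :
    ({a, b, c, d} : Set V) ⊆ M := by
  have key : ∀ x ∉ M, ∀ y ∈ M, ∀ z ∈ M, G.Adj x y → G.Adj x z := fun x hx y hy z hz =>
    (hM.adj_iff hx hy hz).1
  have hs : ∀ x y, G.Adj x y → G.Adj y x := fun _ _ h => h.symm
  obtain ⟨hab, hac, had, hbc, hbd, hcd, eab, ebc, ecd, nac, nad, nbd⟩ := h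
  simp only [mem_insert_iff, mem_singleton_iff, insert_subset_iff, singleton_subset_iff] at *
  rcases hu with rfl | rfl | rfl | rfl <;> rcases hw with rfl | rfl | rfl | rfl <;> grind

theorem IsInducedP4.map {W : Type*} {H : SimpleGraph W} {a b c d : V} (f : V → W)
    (h : IsInducedP4 G a b c d)
    (hf : ∀ u ∈ ({a, b, c, d} : Set V), ∀ w ∈ ({a, b, c, d} : Set V), u ≠ w →
      f u ≠ f w ∧ (G.Adj u w ↔ H.Adj (f u) (f w))) :
    IsInducedP4 H (f a) (f b) (f c) (f d) := by
  obtain ⟨hab, hac, had, hbc, hbd, hcd, eab, ebc, ecd, nac, nad, nbd⟩ := h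
  obtain ⟨fab, gab⟩ := hf a (by simp) b (by simp) hab
  obtain ⟨fac, gac⟩ := hf a (by simp) c (by simp) hac
  obtain ⟨fad, gad⟩ := hf a (by simp) d (by simp) had
  obtain ⟨fbc, gbc⟩ := hf b (by simp) c (by simp) hbc
  obtain ⟨fbd, gbd⟩ := hf b (by simp) d (by simp) hbd
  obtain ⟨fcd, gcd⟩ := hf c (by simp) d (by simp) hcd
  exact ⟨fab, fac, fad, fbc, fbd, fcd, gab.1 eab, gbc.1 ebc, gcd.1 ecd,
    mt gac.2 nac, mt gad.2 nad, mt gbd.2 nbd⟩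

theorem IsInducedP4.induce {S : Set V} {a b c d : V} (h : IsInducedP4 G a b c d)
    (ha : a ∈ S) (hb : b ∈ S) (hc : c ∈ S) (hd : d ∈ S) :
    IsInducedP4 (G.induce S) ⟨a, ha⟩ ⟨b, hb⟩ ⟨c, hc⟩ ⟨d, hd⟩ := by
  simpa [IsInducedP4, Subtype.ext_iff] using h

theorem p4Free_bot : P4Free (⊥ : SimpleGraph V) := fun _ _ _ _ ⟨_, _, _, _, _, _, h, _⟩ => h

theorem P4Free.induce (hG : P4Free G) (S : Set V) : P4Free (G.induce S) :=
  fun _ _ _ _ h => hG _ _ _ _ <| h.map Subtype.val fun _ _ _ _ huw =>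
    ⟨Subtype.val_injective.ne huw, Iff.rfl⟩

theorem P4Free.of_fibers {ι : Type*} (π : V → ι) (hmod : ∀ i, IsModule G (π ⁻¹' {i}))
    (hfib : ∀ i, P4Free (G.induce (π ⁻¹' {i})))
    (hcross : ∀ a b c d, IsInducedP4 G a b c d → InjOn π {a, b, c, d} → False) : P4Free G := by
  intro a b c d h
  by_cases hinj : InjOn π {a, b, c, d}
  · exact hcross a b c d h hinj
  rw [InjOn] at hinj
  push Not at hinj
  obtain ⟨u, hu, w, hw, hπ, huw⟩ := hinj
  have hsub := (hmod (π u)).subset_of_isInducedP4 h hu hw huw rfl hπ.symm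
  exact hfib (π u) _ _ _ _ <| h.induce (hsub (by simp)) (hsub (by simp)) (hsub (by simp))
    (hsub (by simp))

theorem ncard_le_ncard_of_fiberwise {α β : Type*} [Finite α] (f : α → β) {A B : Set α}
    (h : ∀ b, (A ∩ f ⁻¹' {b}).ncard ≤ (B ∩ f ⁻¹' {b}).ncard) : A.ncard ≤ B.ncard := by
  classical
  have := Fintype.ofFinite α
  have hsum (C : Set α) : C.ncard = ∑ b ∈ Finset.univ.image f, (C ∩ f ⁻¹' {b}).ncard := by
    rw [ncard_eq_toFinset_card', Finset.card_eq_sum_card_fiberwise (f := f)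
      (t := Finset.univ.image f) fun a _ => by simp]
    refine Finset.sum_congr rfl fun b _ => ?_
    rw [ncard_eq_toFinset_card']
    congr 1
    ext
    simp
  rw [hsum A, hsum B]
  exact Finset.sum_le_sum fun b _ => h b

/-- Ordered pairs, so each deleted edge is counted twice. -/
def deletedPairs (G H : SimpleGraph V) : Set (V × V) := {p | G.Adj p.1 p.2 ∧ ¬ H.Adj p.1 p.2}

structure IsOptimal (G H : SimpleGraph V) : Prop where
  le : H ≤ G
  p4Free : P4Free H
  ncard_le : ∀ H', H' ≤ G → P4Free H' → (deletedPairs G H).ncard ≤ (deletedPairs G H').ncard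

theorem exists_isOptimal [Finite V] (G : SimpleGraph V) : ∃ H, IsOptimal G H := by
  obtain ⟨H, ⟨hle, hH⟩, hmin⟩ := exists_min_image {H | H ≤ G ∧ P4Free H}
    (fun H => (deletedPairs G H).ncard) (toFinite _) ⟨⊥, bot_le, p4Free_bot⟩
  exact ⟨H, hle, hH, fun H' hle' hH' => hmin H' ⟨hle', hH'⟩⟩

theorem IsOptimal.self (hG : P4Free G) : IsOptimal G G :=
  ⟨le_rfl, hG, fun _ _ _ => by simp [deletedPairs]⟩

theorem IsOptimal.of_ncard_le {H' : SimpleGraph V} (hH : IsOptimal G H) (hle : H' ≤ G)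
    (hH' : P4Free H') (hcard : (deletedPairs G H').ncard ≤ (deletedPairs G H).ncard) :
    IsOptimal G H' :=
  ⟨hle, hH', fun K hK hK' => hcard.trans (hH.ncard_le K hK hK')⟩

theorem ncard_deletedPairs_induce (G H : SimpleGraph V) (S : Set V) :
    (deletedPairs (G.induce S) (H.induce S)).ncard = (deletedPairs G H ∩ S ×ˢ S).ncard := by
  rw [← ncard_image_of_injective _ (Subtype.val_injective.prodMap Subtype.val_injective)]
  congr 1
  ext ⟨x, y⟩
  simp [deletedPairs]

theorem ncard_deletedPairs_inter_swap {β : Type*} (G H : SimpleGraph V) (g : V → β) (b₁ b₂ : β) :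
    (deletedPairs G H ∩ (fun p => (g p.1, g p.2)) ⁻¹' {(b₁, b₂)}).ncard =
      (deletedPairs G H ∩ (fun p => (g p.1, g p.2)) ⁻¹' {(b₂, b₁)}).ncard := by
  rw [← ncard_image_of_injective _ Prod.swap_injective]
  congr 1
  ext ⟨x, y⟩
  simp [deletedPairs, G.adj_comm, H.adj_comm]
  tauto

theorem ncard_deletedPairs_inter_eq (G H : SimpleGraph V) (M : Set V) (m : V) :
    (deletedPairs G H ∩ {p | p.1 ∉ M ∧ p.2 = m}).ncard =
      {x | x ∉ M ∧ G.Adj x m ∧ ¬ H.Adj x m}.ncard := by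
  rw [← ncard_image_of_injective _ (Prod.mk_left_injective (α := V) m)]
  congr 1
  ext ⟨x, y⟩
  simp only [deletedPairs, mem_inter_iff, mem_image, mem_ofPred_eq, Prod.mk.injEq]
  grind

theorem two_mul_ncard_edgeSet_sdiff [Finite V] (G H : SimpleGraph V) :
    2 * (G.edgeSet \ H.edgeSet).ncard = (deletedPairs G H).ncard := by
  have hD : deletedPairs G H = {p | (G \ H).Adj p.1 p.2} := rfl
  rw [hD, ← edgeSet_sdiff]
  generalize G \ H = D
  classical
  have := Fintype.ofFinite V
  rw [← coe_edgeFinset, ncard_coe_finset, two_mul_card_edgeFinset, ncard_eq_toFinset_card']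
  congr 1
  ext
  simp

/-- `H` with every vertex of `M` given the neighbourhood of `v` outside `M`. -/
def SimpleGraph.exchange (H : SimpleGraph V) (M : Set V) (v : V) : SimpleGraph V where
  Adj x y := ((x ∈ M ↔ y ∈ M) ∧ H.Adj x y) ∨ (x ∉ M ∧ y ∈ M ∧ H.Adj x v) ∨
    (x ∈ M ∧ y ∉ M ∧ H.Adj v y)
  symm := Std.Symm.mk fun x y h => by
    rcases h with ⟨hxy, h⟩ | ⟨hx, hy, h⟩ | ⟨hx, hy, h⟩
    · exact Or.inl ⟨hxy.symm, h.symm⟩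
    · exact Or.inr (Or.inr ⟨hy, hx, h.symm⟩)
    · exact Or.inr (Or.inl ⟨hy, hx, h.symm⟩)
  loopless := Std.Irrefl.mk fun x h => by
    rcases h with ⟨-, h⟩ | ⟨hx, hx', -⟩ | ⟨hx, hx', -⟩
    exacts [H.irrefl h, hx hx', hx' hx]

section Exchange

variable {v : V}

theorem exchange_adj_of_iff {x y : V} (hxy : x ∈ M ↔ y ∈ M) :
    (H.exchange M v).Adj x y ↔ H.Adj x y := by
  simp only [exchange]
  grind

theorem exchange_adj_of_notMem_of_mem {x y : V} (hx : x ∉ M) (hy : y ∈ M) :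
    (H.exchange M v).Adj x y ↔ H.Adj x v := by
  simp only [exchange]
  grind

theorem isModule_exchange : IsModule (H.exchange M v) M := by
  intro x hx
  by_cases h : H.Adj x v
  · exact Or.inl fun m hm => (exchange_adj_of_notMem_of_mem hx hm).2 h
  · exact Or.inr fun m hm h' => h ((exchange_adj_of_notMem_of_mem hx hm).1 h')

theorem IsModule.exchange (hN : IsModule H N) (hNM : Disjoint N M) (hv : v ∈ M) :
    IsModule (H.exchange M v) N := by
  have hvN : v ∉ N := fun h => disjoint_left.1 hNM h hv
  intro x hx
  by_cases hxM : x ∈ M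
  · have key : ∀ n ∈ N, (H.exchange M v).Adj x n ↔ H.Adj v n := fun n hn => by
      rw [(H.exchange M v).adj_comm, H.adj_comm,
        exchange_adj_of_notMem_of_mem (disjoint_left.1 hNM hn) hxM]
    rcases hN v hvN with h | h
    · exact Or.inl fun n hn => (key n hn).2 (h n hn)
    · exact Or.inr fun n hn h' => h n hn ((key n hn).1 h')
  · have key : ∀ n ∈ N, (H.exchange M v).Adj x n ↔ H.Adj x n := fun n hn =>
      exchange_adj_of_iff (iff_of_false hxM (disjoint_left.1 hNM hn))
    rcases hN x hx with h | h
    · exact Or.inl fun n hn => (key n hn).2 (h n hn)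
    · exact Or.inr fun n hn h' => h n hn ((key n hn).1 h')

theorem exchange_le (hHG : H ≤ G) (hM : IsModule G M) (hv : v ∈ M) : H.exchange M v ≤ G := by
  rintro x y (⟨-, h⟩ | ⟨hx, hy, h⟩ | ⟨hx, hy, h⟩)
  · exact hHG h
  · exact (hM.adj_iff hx hy hv).2 (hHG h)
  · exact ((hM.adj_iff hy hx hv).2 (hHG h).symm).symm

theorem P4Free.exchange (hH : P4Free H) (hv : v ∈ M) : P4Free (H.exchange M v) := by
  classical
  intro a b c d h
  by_cases hM : ∃ u ∈ ({a, b, c, d} : Set V), ∃ w ∈ ({a, b, c, d} : Set V),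
      u ≠ w ∧ u ∈ M ∧ w ∈ M
  · obtain ⟨u, hu, w, hw, huw, huM, hwM⟩ := hM
    have hsub := isModule_exchange.subset_of_isInducedP4 h hu hw huw huM hwM
    refine hH _ _ _ _ (h.map id fun x hx y hy hxy => ⟨hxy, ?_⟩)
    exact exchange_adj_of_iff (iff_of_true (hsub hx) (hsub hy))
  -- at most one vertex of the `P₄` lies in `M`; moving it to `v` gives a `P₄` of `H`
  push Not at hM
  let f : V → V := fun u => if u ∈ M then v else u
  refine hH _ _ _ _ (h.map f fun x hx y hy hxy => ?_)
  have := hM x hx y hy hxy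
  by_cases hxM : x ∈ M <;> by_cases hyM : y ∈ M
  · exact absurd hyM (this hxM)
  · simp only [f, hxM, hyM, if_true, if_false]
    refine ⟨fun e => hyM (e ▸ hv), ?_⟩
    rw [(H.exchange M v).adj_comm, H.adj_comm, exchange_adj_of_notMem_of_mem hyM hxM]
  · simp only [f, hxM, hyM, if_true, if_false]
    exact ⟨fun e => hxM (e ▸ hv), exchange_adj_of_notMem_of_mem hxM hyM⟩
  · simp only [f, hxM, hyM, if_false]
    exact ⟨hxy, exchange_adj_of_iff (iff_of_false hxM hyM)⟩

theorem ncard_deletedPairs_exchange_inter_le (hM : IsModule G M) (hv : v ∈ M)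
    (hmin : ∀ u ∈ M, {x | x ∉ M ∧ G.Adj x v ∧ ¬ H.Adj x v}.ncard ≤
      {x | x ∉ M ∧ G.Adj x u ∧ ¬ H.Adj x u}.ncard) (m : V) :
    (deletedPairs G (H.exchange M v) ∩ {p | p.1 ∉ M ∧ p.2 = m ∧ m ∈ M}).ncard ≤
      (deletedPairs G H ∩ {p | p.1 ∉ M ∧ p.2 = m ∧ m ∈ M}).ncard := by
  by_cases hm : m ∈ M
  · have hX : {x | x ∉ M ∧ G.Adj x m ∧ ¬ (H.exchange M v).Adj x m} =
        {x | x ∉ M ∧ G.Adj x v ∧ ¬ H.Adj x v} := by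
      ext x
      exact and_congr_right fun hx => and_congr (hM.adj_iff hx hm hv)
        (not_congr (exchange_adj_of_notMem_of_mem hx hm))
    simp only [hm, and_true]
    rw [ncard_deletedPairs_inter_eq, ncard_deletedPairs_inter_eq, hX]
    exact hmin m hm
  · simp [hm]

theorem ncard_deletedPairs_exchange_le [Finite V] (hM : IsModule G M) (hv : v ∈ M)
    (hmin : ∀ u ∈ M, {x | x ∉ M ∧ G.Adj x v ∧ ¬ H.Adj x v}.ncard ≤
      {x | x ∉ M ∧ G.Adj x u ∧ ¬ H.Adj x u}.ncard) :
    (deletedPairs G (H.exchange M v)).ncard ≤ (deletedPairs G H).ncard := by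
  classical
  -- fibres of `(g x, g y)`: pairs on one side of `M` are untouched, and the pairs `(x, m)` with
  -- `x ∉ M` count the edges lost at `m`, which the exchange replaces by those lost at `v`
  let g : V → Option V := fun u => if u ∈ M then some u else none
  have hg_none (x : V) : g x = none ↔ x ∉ M := by simp [g]
  have hg_some (x m : V) : g x = some m ↔ x ∈ M ∧ x = m := by simp [g]
  have hsame (x y : V) (hxy : x ∈ M ↔ y ∈ M) :
      (x, y) ∈ deletedPairs G (H.exchange M v) ↔ (x, y) ∈ deletedPairs G H := by
    simp [deletedPairs, exchange_adj_of_iff hxy]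
  have hcross (m : V) : (fun p : V × V => (g p.1, g p.2)) ⁻¹' {(none, some m)} =
      {p | p.1 ∉ M ∧ p.2 = m ∧ m ∈ M} := by
    ext ⟨x, y⟩
    simp only [mem_preimage, mem_singleton_iff, Prod.mk.injEq, hg_none, hg_some, mem_ofPred_eq]
    grind
  refine ncard_le_ncard_of_fiberwise (fun p => (g p.1, g p.2)) ?_
  rintro ⟨_ | m, _ | m'⟩
  · refine le_of_eq (congrArg ncard ?_)
    ext ⟨x, y⟩
    simp only [mem_inter_iff, mem_preimage, mem_singleton_iff, Prod.mk.injEq, hg_none]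
    exact and_congr_left fun h => hsame x y (iff_of_false h.1 h.2)
  · rw [hcross]
    exact ncard_deletedPairs_exchange_inter_le hM hv hmin m'
  · rw [ncard_deletedPairs_inter_swap, ncard_deletedPairs_inter_swap G H, hcross]
    exact ncard_deletedPairs_exchange_inter_le hM hv hmin m
  · refine le_of_eq (congrArg ncard ?_)
    ext ⟨x, y⟩
    simp only [mem_inter_iff, mem_preimage, mem_singleton_iff, Prod.mk.injEq, hg_some]
    exact and_congr_left fun h => hsame x y (iff_of_true h.1.1 h.2.1)

end Exchange

theorem IsOptimal.exists_exchange [Finite V] (hH : IsOptimal G H) (hM : IsModule G M) :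
    ∃ H', IsOptimal G H' ∧ IsModule H' M ∧ ∀ N, IsModule H N → Disjoint N M → IsModule H' N := by
  rcases M.eq_empty_or_nonempty with rfl | hne
  · exact ⟨H, hH, isModule_empty, fun _ hN _ => hN⟩
  obtain ⟨v, hv, hmin⟩ := exists_min_image M
    (fun u => {x | x ∉ M ∧ G.Adj x u ∧ ¬ H.Adj x u}.ncard) M.toFinite hne
  exact ⟨H.exchange M v, hH.of_ncard_le (exchange_le hH.le hM hv) (hH.p4Free.exchange hv)
    (ncard_deletedPairs_exchange_le hM hv hmin), isModule_exchange,
    fun N hN hNM => hN.exchange hNM hv⟩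

theorem exists_isOptimal_isModule_fiber [Finite V] {ι : Type*} [Finite ι] (π : V → ι)
    (hπ : ∀ i, IsModule G (π ⁻¹' {i})) :
    ∃ H, IsOptimal G H ∧ ∀ i, IsModule H (π ⁻¹' {i}) := by
  classical
  have := Fintype.ofFinite ι
  suffices ∀ s : Finset ι, ∃ H, IsOptimal G H ∧ ∀ i ∈ s, IsModule H (π ⁻¹' {i}) by
    simpa using this Finset.univ
  intro s
  induction s using Finset.induction_on with
  | empty => exact (exists_isOptimal G).imp fun H hH => ⟨hH, by simp⟩
  | insert j s hj ih =>
    obtain ⟨H, hH, hs⟩ := ih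
    obtain ⟨H', hH', hj', hdisj⟩ := hH.exists_exchange (hπ j)
    refine ⟨H', hH', Finset.forall_mem_insert _ _ _ |>.2 ⟨hj', fun i hi => hdisj _ (hs i hi) ?_⟩⟩
    exact Disjoint.preimage π (disjoint_singleton.2 (ne_of_mem_of_not_mem hi hj))

/-- `H` between the fibres of `π`, and `K i` inside the fibre over `i`. -/
def SimpleGraph.glue {ι : Type*} (H : SimpleGraph V) (π : V → ι)
    (K : ∀ i, SimpleGraph (π ⁻¹' {i})) : SimpleGraph V where
  Adj x y := (∃ i, ∃ (hx : π x = i) (hy : π y = i), (K i).Adj ⟨x, hx⟩ ⟨y, hy⟩) ∨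
    (π x ≠ π y ∧ H.Adj x y)
  symm := Std.Symm.mk fun x y h => by
    rcases h with ⟨i, hx, hy, h⟩ | ⟨hne, h⟩
    · exact Or.inl ⟨i, hy, hx, h.symm⟩
    · exact Or.inr ⟨hne.symm, h.symm⟩
  loopless := Std.Irrefl.mk fun x h => by
    rcases h with ⟨i, _, _, h⟩ | ⟨hne, -⟩
    exacts [(K i).irrefl h, hne rfl]

section Glue

variable {ι : Type*} {π : V → ι} {K : ∀ i, SimpleGraph (π ⁻¹' {i})}

theorem glue_adj_of_ne {x y : V} (h : π x ≠ π y) : (H.glue π K).Adj x y ↔ H.Adj x y := by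
  refine ⟨?_, fun h' => Or.inr ⟨h, h'⟩⟩
  rintro (⟨i, hx, hy, -⟩ | ⟨-, h'⟩)
  exacts [absurd (hx.trans hy.symm) h, h']

theorem induce_glue (i : ι) : (H.glue π K).induce (π ⁻¹' {i}) = K i := by
  ext ⟨x, hx⟩ ⟨y, hy⟩
  refine ⟨?_, fun h => Or.inl ⟨i, hx, hy, h⟩⟩
  rintro (⟨j, hxj, hyj, h⟩ | ⟨hne, -⟩)
  · obtain rfl : j = i := hxj.symm.trans hx
    exact h
  · exact absurd (hx.trans hy.symm) hne

theorem glue_le (hH : H ≤ G) (hK : ∀ i, K i ≤ G.induce (π ⁻¹' {i})) : H.glue π K ≤ G := by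
  rintro _ _ (⟨i, _, _, h⟩ | ⟨-, h⟩)
  exacts [hK i h, hH h]

theorem IsModule.glue (hM : IsModule H M) (hMπ : ∀ x ∈ M, ∀ y, π y = π x → y ∈ M) :
    IsModule (H.glue π K) M := by
  have key : ∀ x ∉ M, ∀ m ∈ M, (H.glue π K).Adj x m ↔ H.Adj x m := fun x hx m hm =>
    glue_adj_of_ne fun h => hx (hMπ m hm x h)
  intro x hx
  exact (hM x hx).imp (fun h m hm => (key x hx m hm).2 (h m hm))
    (fun h m hm h' => h m hm ((key x hx m hm).1 h'))

theorem isModule_fiber_glue (hH : ∀ i, IsModule H (π ⁻¹' {i})) (i : ι) :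
    IsModule (H.glue π K) (π ⁻¹' {i}) :=
  (hH i).glue fun _ hx _ hy => hy.trans hx

theorem P4Free.glue (hH : P4Free H) (hmod : ∀ i, IsModule H (π ⁻¹' {i}))
    (hK : ∀ i, P4Free (K i)) : P4Free (H.glue π K) := by
  refine P4Free.of_fibers π (isModule_fiber_glue hmod) (fun i => ?_) fun _ _ _ _ h hinj => ?_
  · rw [induce_glue]
    exact hK i
  · exact hH _ _ _ _ <| h.map id fun u hu w hw huw => ⟨huw, glue_adj_of_ne (hinj.ne hu hw huw)⟩

theorem ncard_deletedPairs_glue_le [Finite V] (hH : H ≤ G) (hH' : P4Free H)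
    (hK : ∀ i, IsOptimal (G.induce (π ⁻¹' {i})) (K i)) :
    (deletedPairs G (H.glue π K)).ncard ≤ (deletedPairs G H).ncard := by
  refine ncard_le_ncard_of_fiberwise (Prod.map π π) fun ⟨i, j⟩ => ?_
  rcases eq_or_ne i j with rfl | hij
  · rw [← singleton_prod_singleton, preimage_prod_map_prod, ← ncard_deletedPairs_induce,
      ← ncard_deletedPairs_induce, induce_glue]
    exact (hK i).ncard_le _ (fun _ _ h => hH h) (hH'.induce _)
  · refine le_of_eq (congrArg ncard ?_)
    ext ⟨x, y⟩
    simp only [deletedPairs, mem_inter_iff, mem_preimage, Prod.map, mem_singleton_iff,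
      Prod.mk.injEq, mem_ofPred_eq]
    refine and_congr_left fun ⟨hx, hy⟩ => ?_
    rw [glue_adj_of_ne (hx ▸ hy ▸ hij)]

end Glue

structure IsModularPartition {ι : Type*} (G H : SimpleGraph V) (π : V → ι) : Prop where
  exists_ne : ∀ i, ∃ v, π v ≠ i
  isModule_fiber : ∀ i, IsModule H (π ⁻¹' {i})
  isModule_cases : ∀ M, IsModule G M → (∀ x ∈ M, ∀ y ∈ M, π x = π y) ∨
    (IsModule H M ∧ ∀ x ∈ M, ∀ y, π y = π x → y ∈ M)

theorem IsModularPartition.exists_isOptimal [Finite V] {ι : Type*} {π : V → ι}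
    (hπ : IsModularPartition G H π) (hH : IsOptimal G H)
    (hK : ∀ i, ∃ K, IsOptimal (G.induce (π ⁻¹' {i})) K ∧
      ∀ M, IsModule (G.induce (π ⁻¹' {i})) M → IsModule K M) :
    ∃ H', IsOptimal G H' ∧ ∀ M, IsModule G M → IsModule H' M := by
  choose K hK hKM using hK
  refine ⟨H.glue π K, hH.of_ncard_le (glue_le hH.le fun i => (hK i).le)
    (hH.p4Free.glue hπ.isModule_fiber fun i => (hK i).p4Free)
    (ncard_deletedPairs_glue_le hH.le hH.p4Free hK), fun M hM => ?_⟩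
  rcases hπ.isModule_cases M hM with hMπ | ⟨hMH, hMπ⟩
  · rcases M.eq_empty_or_nonempty with rfl | ⟨m, hm⟩
    · exact isModule_empty
    refine (isModule_fiber_glue hπ.isModule_fiber (π m)).of_induce (fun x hx => hMπ x hx m hm) ?_
    rw [induce_glue]
    exact hKM _ _ (hM.induce _)
  · exact hMH.glue hMπ

theorem SimpleGraph.Reachable.exists_adj_mem_notMem {S : Set V} {x y : V} (h : G.Reachable x y)
    (hx : x ∈ S) (hy : y ∉ S) : ∃ u ∈ S, ∃ w ∉ S, G.Adj u w := by
  obtain ⟨p⟩ := h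
  obtain ⟨d, -, hd₁, hd₂⟩ := p.exists_boundary_dart S hx hy
  exact ⟨_, hd₁, _, hd₂, d.adj⟩

theorem IsModule.forall_reachable_or (hM : IsModule G M) :
    (∀ x ∈ M, ∀ y ∈ M, G.Reachable x y) ∨ ∀ x ∈ M, ∀ y, G.Reachable x y → y ∈ M := by
  by_contra! ⟨⟨m₁, hm₁, m₂, hm₂, h₁₂⟩, ⟨x, hx, y, hxy, hy⟩⟩
  obtain ⟨u, hu, w, hw, huw⟩ := hxy.exists_adj_mem_notMem hx hy
  have hw' : ∀ m ∈ M, G.Adj w m := fun m hm => (hM.adj_iff hw hu hm).1 huw.symm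
  exact h₁₂ ((hw' m₁ hm₁).reachable.symm.trans (hw' m₂ hm₂).reachable)

theorem supp_connectedComponentMk_eq_iff {x y : V} :
    (G.connectedComponentMk x).supp = (G.connectedComponentMk y).supp ↔ G.Reachable x y :=
  ConnectedComponent.supp_inj.trans ConnectedComponent.eq

theorem isModularPartition_connectedComponent {K : SimpleGraph V} (hK : ¬ K.Preconnected)
    (hGK : ∀ M, IsModule G M → IsModule K M)
    (hH : ∀ M : Set V, (∀ x ∈ M, ∀ y, K.Reachable x y → y ∈ M) → IsModule H M) :
    IsModularPartition G H fun v => (K.connectedComponentMk v).supp := by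
  refine ⟨fun i => ?_, fun i => hH _ fun x hx y hxy => ?_, fun M hM => ?_⟩
  · obtain ⟨u, w, huw⟩ : ∃ u w, ¬ K.Reachable u w := by simpa [Preconnected] using hK
    by_contra! h
    exact huw (supp_connectedComponentMk_eq_iff.1 ((h u).trans (h w).symm))
  · exact (supp_connectedComponentMk_eq_iff.2 hxy.symm).trans hx
  · refine (hGK M hM).forall_reachable_or.imp (fun h x hx y hy => ?_) fun h => ⟨hH M h, ?_⟩
    · exact supp_connectedComponentMk_eq_iff.2 (h x hx y hy)
    · exact fun x hx y hy => h x hx y (supp_connectedComponentMk_eq_iff.1 hy).symm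

theorem exists_isModularPartition_of_not_preconnected [Finite V] (hG : ¬ G.Preconnected) :
    ∃ π : V → Set V, ∃ H, IsOptimal G H ∧ IsModularPartition G H π := by
  obtain ⟨H, hH⟩ := exists_isOptimal G
  refine ⟨_, H, hH, isModularPartition_connectedComponent hG (fun _ => id) fun M hM x hx => ?_⟩
  exact Or.inr fun m hm h => hx (hM m hm x (hH.le h).reachable.symm)

theorem exists_isModularPartition_of_not_preconnected_compl [Finite V]
    (hG : ¬ Gᶜ.Preconnected) :
    ∃ π : V → Set V, ∃ H, IsOptimal G H ∧ IsModularPartition G H π := by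
  obtain ⟨H₀, hH₀⟩ := exists_isOptimal G
  set π : V → Set V := fun v => (Gᶜ.connectedComponentMk v).supp
  set H := H₀ ⊔ (⊤ : SimpleGraph (Set V)).comap π
  have hcross : ∀ x y, π x ≠ π y → H.Adj x y := fun x y h => Or.inr h
  have hle : H ≤ G := by
    refine sup_le hH₀.le fun x y (h : π x ≠ π y) => ?_
    by_contra hxy
    refine h (supp_connectedComponentMk_eq_iff.2 ((compl_adj G x y).2 ⟨?_, hxy⟩).reachable)
    rintro rfl
    exact h rfl
  have hH : ∀ M : Set V, (∀ x ∈ M, ∀ y, Gᶜ.Reachable x y → y ∈ M) → IsModule H M :=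
    fun M hM x hx => Or.inl fun m hm =>
      hcross x m fun h => hx (hM m hm x (supp_connectedComponentMk_eq_iff.1 h).symm)
  have hπ := isModularPartition_connectedComponent hG (fun _ => IsModule.compl) hH
  have hp4 : P4Free H := by
    refine P4Free.of_fibers π hπ.isModule_fiber (fun i => ?_) fun a b c d h hinj => ?_
    · have : H.induce (π ⁻¹' {i}) = H₀.induce (π ⁻¹' {i}) := by
        ext ⟨x, hx⟩ ⟨y, hy⟩
        simp only [comap_adj, sup_adj, top_adj, H]
        exact or_iff_left fun h => h (hx.trans hy.symm)
      rw [this]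
      exact hH₀.p4Free.induce _
    · obtain ⟨-, hac, -, -, -, -, -, -, -, nac, -, -⟩ := h
      exact nac (hcross a c (hinj.ne (by simp) (by simp) hac))
  refine ⟨π, H, hH₀.of_ncard_le hle hp4 (ncard_le_ncard fun p hp => ?_), hπ⟩
  exact ⟨hp.1, fun h => hp.2 (Or.inl h)⟩

def IsProperModule (G : SimpleGraph V) (S : Set V) : Prop := IsModule G S ∧ S ≠ univ

theorem IsModule.subset_or_subset (hG : G.Preconnected) (hGc : Gᶜ.Preconnected) {A B : Set V}
    (hA : IsModule G A) (hB : IsModule G B) (hAB : A ∪ B = univ) (hI : (A ∩ B).Nonempty) :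
    A ⊆ B ∨ B ⊆ A := by
  by_contra! ⟨hAB', hBA'⟩
  obtain ⟨x₀, hx₀A, hx₀B⟩ := not_subset.1 hAB'
  obtain ⟨z₀, hz₀B, hz₀A⟩ := not_subset.1 hBA'
  obtain ⟨y₀, -, hy₀B⟩ := hI
  have hB' : ∀ z ∉ A \ B, z ∈ B := fun z hz => by
    have := hAB ▸ mem_univ z
    grind
  -- `A \ B` is completely joined or completely non-adjacent to its complement
  have key : ∀ x ∈ A \ B, ∀ z ∉ A \ B, G.Adj x z ↔ G.Adj x₀ y₀ := fun x hx z hz =>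
    (hB.adj_iff hx.2 (hB' z hz) hz₀B).trans <| G.adj_comm _ _ |>.trans <|
      (hA.adj_iff hz₀A hx.1 hx₀A).trans <| G.adj_comm _ _ |>.trans <| hB.adj_iff hx₀B hz₀B hy₀B
  by_cases h : G.Adj x₀ y₀
  · obtain ⟨u, hu, w, hw, huw⟩ :=
      (hGc x₀ y₀).exists_adj_mem_notMem (S := A \ B) ⟨hx₀A, hx₀B⟩ fun h => h.2 hy₀B
    exact ((compl_adj G u w).1 huw).2 ((key u hu w hw).2 h)
  · obtain ⟨u, hu, w, hw, huw⟩ :=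
      (hG x₀ y₀).exists_adj_mem_notMem (S := A \ B) ⟨hx₀A, hx₀B⟩ fun h => h.2 hy₀B
    exact h ((key u hu w hw).1 huw)

theorem eq_of_maximal_isProperModule (hG : G.Preconnected) (hGc : Gᶜ.Preconnected)
    {P Q : Set V} {x : V} (hP : Maximal (IsProperModule G) P) (hQ : Maximal (IsProperModule G) Q)
    (hxP : x ∈ P) (hxQ : x ∈ Q) : P = Q := by
  by_cases hU : P ∪ Q = univ
  · rcases hP.1.1.subset_or_subset hG hGc hQ.1.1 hU ⟨x, hxP, hxQ⟩ with h | h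
    exacts [hP.eq_of_le hQ.1 h, (hQ.eq_of_le hP.1 h).symm]
  · have hPQ := hP.eq_of_le ⟨hP.1.1.union hQ.1.1 ⟨x, hxP, hxQ⟩, hU⟩ subset_union_left
    exact (hQ.eq_of_le hP.1 (hPQ ▸ subset_union_right)).symm

theorem exists_isModularPartition_of_preconnected [Finite V] [Nontrivial V]
    (hG : G.Preconnected) (hGc : Gᶜ.Preconnected) :
    ∃ π : V → Set V, ∃ H, IsOptimal G H ∧ IsModularPartition G H π := by
  have hmax {S : Set V} (hS : IsProperModule G S) : ∃ P, S ⊆ P ∧ Maximal (IsProperModule G) P :=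
    Finite.exists_le_maximal hS
  choose π hvπ hπ using fun v => hmax ⟨isModule_singleton G v, singleton_ne_univ v⟩
  have hfib (x y : V) : π y = π x ↔ y ∈ π x :=
    ⟨fun h => h ▸ hvπ y rfl, fun h => eq_of_maximal_isProperModule hG hGc (hπ y) (hπ x)
      (hvπ y rfl) h⟩
  have hfibmod (i : Set V) : IsModule G (π ⁻¹' {i}) := by
    rcases (π ⁻¹' {i}).eq_empty_or_nonempty with h | ⟨x, rfl⟩
    · rw [h]
      exact isModule_empty
    · rw [show π ⁻¹' {π x} = π x from ext (hfib x)]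
      exact (hπ x).1.1
  obtain ⟨H, hH, hHπ⟩ := exists_isOptimal_isModule_fiber π hfibmod
  refine ⟨π, H, hH, fun i => ?_, hHπ, fun M hM => ?_⟩
  · obtain ⟨v⟩ := (inferInstance : Nontrivial V).to_nonempty
    by_cases h : π v = i
    · obtain ⟨w, hw⟩ := (ne_univ_iff_exists_notMem _).1 (hπ v).1.2
      exact ⟨w, fun h' => hw ((hfib v w).1 (h'.trans h.symm))⟩
    · exact ⟨v, h⟩
  · by_cases hMu : M = univ
    · subst hMu
      exact Or.inr ⟨fun x hx => (hx (mem_univ x)).elim, fun _ _ y _ => mem_univ y⟩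
    · obtain ⟨P, hMP, hP⟩ := hmax ⟨hM, hMu⟩
      have hπP {x : V} (hx : x ∈ M) : π x = P :=
        eq_of_maximal_isProperModule hG hGc (hπ x) hP (hvπ x rfl) (hMP hx)
      exact Or.inl fun x hx y hy => (hπP hx).trans (hπP hy).symm

theorem exists_isModularPartition [Finite V] (hG : ¬ P4Free G) :
    ∃ π : V → Set V, ∃ H, IsOptimal G H ∧ IsModularPartition G H π := by
  by_cases h₁ : G.Preconnected
  · by_cases h₂ : Gᶜ.Preconnected
    · obtain ⟨a, b, -, -, hab, -⟩ : ∃ a b c d, IsInducedP4 G a b c d := by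
        simpa [P4Free] using hG
      have : Nontrivial V := ⟨⟨a, b, hab⟩⟩
      exact exists_isModularPartition_of_preconnected h₁ h₂
    · exact exists_isModularPartition_of_not_preconnected_compl h₂
  · exact exists_isModularPartition_of_not_preconnected h₁

theorem exists_isOptimal_forall_isModule [Finite V] (G : SimpleGraph V) :
    ∃ H, IsOptimal G H ∧ ∀ M, IsModule G M → IsModule H M := by
  induction hn : Nat.card V using Nat.strong_induction_on generalizing V with
  | _ n ih =>
  by_cases hG : P4Free G
  · exact ⟨G, .self hG, fun _ => id⟩
  obtain ⟨π, H, hH, hπ⟩ := exists_isModularPartition hG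
  refine hπ.exists_isOptimal hH fun i => ih _ ?_ (G.induce (π ⁻¹' {i})) rfl
  obtain ⟨v, hv⟩ := hπ.exists_ne i
  rw [← hn, Nat.card_coe_set_eq]
  exact ncard_lt_card fun h => hv (h ▸ mem_univ v : v ∈ π ⁻¹' {i})

theorem stmt5 [Finite V] (G : SimpleGraph V) :
    ∃ F : Set (Sym2 V), IsOptDelSet G F ∧
      ∀ M : Set V, IsModule G M → IsModule (G.deleteEdges F) M := by
  obtain ⟨H, hH, hHM⟩ := exists_isOptimal_forall_isModule G
  refine ⟨G.edgeSet \ H.edgeSet, ⟨⟨sdiff_subset, ?_⟩, fun F ⟨hF, hFp⟩ => ?_⟩, ?_⟩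
  · rw [deleteEdges_sdiff_eq_of_le hH.le]
    exact hH.p4Free
  · have := hH.ncard_le _ (deleteEdges_le F) hFp
    rw [← two_mul_ncard_edgeSet_sdiff, ← two_mul_ncard_edgeSet_sdiff, edgeSet_deleteEdges,
      sdiff_sdiff_cancel_left hF] at this
    omega
  · rwa [deleteEdges_sdiff_eq_of_le hH.le]
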